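/- Assume the series X₀ converges almost surely, −∞ < E[log|c(ε₀)|] < 0, and for some μ > 0, E[|c(ε₀)|^μ] < 1 and E[|g(ε₀)|^μ] < ∞. Then there exist α₀ > 0 and, for each 0 < α ≤ α₀, a constant C₈ such that for every k ∈ ℤ and every m ≥ 1, P(|η_k − η_{k,m}| > e^{−αm}) ≤ P(|ε₀| ≥ e^{αm}) + C₈ m^{−μ}. -/

import Mathlib

open MeasureTheory ProbabilityTheory Filter Finset
open scoped ENNReal Topology

/-!
Let `T_i` be the summands of the series defining `X_k` (`garchTerm`). By independence
`E|T_i|^μ = E|g(ε₀)|^μ ρ^i` with `ρ = E|c(ε₀)|^μ < 1`, so (by subadditivity of `x ↦ x^μ` if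
`μ ≤ 1`, by Minkowski if `μ ≥ 1`) the tail `∑_{i ≥ m} |T_i|` has `μ`-th moment `O(e^{-Lm})`. This
tail dominates `|X_k - X_{k,m}|`, and the whole sum dominates `|X_k|` and `|X_{k,m}|`.
Since `f (t x) = t^ν f x` for `t > 0`, the mean value theorem for `exp` gives
`|η_k - η_{k,m}| ≤ (ν/2) e^{ν max(X_k, X_{k,m})/2} |X_k - X_{k,m}| |ε_k|^ν`.
Writing `L = 2μγ` and taking `α ≤ γ / (2(1 + ν))`, the event `|η_k - η_{k,m}| > e^{-αm}` forces
`|ε_k| ≥ e^{αm}`, or `∑ |T_i| ≥ γm/ν`, or `∑_{i ≥ m} |T_i| ≥ (2/ν) e^{-γm}`; by Markov's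
inequality the last two have probability `O(m^{-μ})` and `O(e^{-μγm}) = O(m^{-μ})`.
-/

lemma Real.abs_exp_sub_exp_le (a b : ℝ) :
    |Real.exp a - Real.exp b| ≤ Real.exp (max a b) * |a - b| := by
  wlog hba : b ≤ a generalizing a b
  · simpa only [abs_sub_comm, max_comm] using this b a (le_of_not_ge hba)
  have hexp : Real.exp a * (1 - Real.exp (b - a)) = Real.exp a - Real.exp b := by
    rw [mul_sub, mul_one, ← Real.exp_add, add_sub_cancel]
  rw [max_eq_left hba, abs_of_nonneg (sub_nonneg.2 (Real.exp_le_exp.2 hba)),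
    abs_of_nonneg (sub_nonneg.2 hba), ← hexp]
  exact mul_le_mul_of_nonneg_left (by linarith [Real.add_one_le_exp (b - a)]) (Real.exp_pos a).le

def IsPowerTransform (ν : ℝ) (f : ℝ → ℝ) : Prop :=
  (∀ x, f x = |x| ^ ν) ∨ (∀ x, f x = Real.sign x * |x| ^ ν)

namespace IsPowerTransform

variable {ν : ℝ} {f : ℝ → ℝ}

lemma apply_mul_of_pos (hf : IsPowerTransform ν f) {t : ℝ} (ht : 0 < t) (x : ℝ) :
    f (t * x) = t ^ ν * f x := by
  have habs : |t * x| ^ ν = t ^ ν * |x| ^ ν := by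
    rw [abs_mul, abs_of_pos ht, Real.mul_rpow ht.le (abs_nonneg x)]
  have hsign : Real.sign (t * x) = Real.sign x := by
    rcases lt_trichotomy x 0 with hx | rfl | hx
    · rw [Real.sign_of_neg hx, Real.sign_of_neg (mul_neg_of_pos_of_neg ht hx)]
    · simp
    · rw [Real.sign_of_pos hx, Real.sign_of_pos (mul_pos ht hx)]
  rcases hf with hf | hf
  · rw [hf, hf, habs]
  · rw [hf, hf, habs, hsign]; ring

lemma abs_apply_le (hf : IsPowerTransform ν f) (x : ℝ) : |f x| ≤ |x| ^ ν := by
  rcases hf with hf | hf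
  · rw [hf, abs_of_nonneg (Real.rpow_nonneg (abs_nonneg x) ν)]
  · rw [hf, abs_mul, abs_of_nonneg (Real.rpow_nonneg (abs_nonneg x) ν)]
    rcases Real.sign_apply_eq x with h | h | h <;> simp [h, Real.rpow_nonneg]

lemma abs_apply_exp_mul_sub_apply_exp_mul_le (hf : IsPowerTransform ν f) (hν : 0 ≤ ν)
    (x y e : ℝ) :
    |f (Real.exp (x / 2) * e) - f (Real.exp (y / 2) * e)| ≤
      ν / 2 * Real.exp (ν * max x y / 2) * |x - y| * |e| ^ ν := by
  have hexp (z : ℝ) : Real.exp (z / 2) ^ ν = Real.exp (ν * z / 2) := by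
    rw [← Real.exp_mul]; ring_nf
  have hmax : max (ν * x / 2) (ν * y / 2) = ν * max x y / 2 := by
    rw [mul_max_of_nonneg _ _ hν, max_div_div_right (by norm_num : (0:ℝ) ≤ 2)]
  have hdiff : |ν * x / 2 - ν * y / 2| = ν / 2 * |x - y| := by
    rw [show ν * x / 2 - ν * y / 2 = ν / 2 * (x - y) by ring, abs_mul,
      abs_of_nonneg (by positivity : 0 ≤ ν / 2)]
  rw [hf.apply_mul_of_pos (Real.exp_pos _), hf.apply_mul_of_pos (Real.exp_pos _),
    hexp, hexp, ← sub_mul, abs_mul]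
  calc |Real.exp (ν * x / 2) - Real.exp (ν * y / 2)| * |f e|
      ≤ Real.exp (ν * max x y / 2) * (ν / 2 * |x - y|) * |e| ^ ν := by
        rw [← hmax, ← hdiff]
        exact mul_le_mul (Real.abs_exp_sub_exp_le _ _) (hf.abs_apply_le e)
          (abs_nonneg _) (by positivity)
    _ = ν / 2 * Real.exp (ν * max x y / 2) * |x - y| * |e| ^ ν := by ring

end IsPowerTransform

lemma Real.half_mul_exp_mul_exp_mul_exp_rpow_le {ν γ α x : ℝ} (hν : 0 < ν) (hx : 0 ≤ x)
    (hα : α ≤ γ / (2 * (1 + ν))) :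
    ν / 2 * Real.exp (ν * (γ / ν * x) / 2) * (2 / ν * Real.exp (-(γ * x))) *
      Real.exp (α * x) ^ ν ≤ Real.exp (-α * x) := by
  rw [le_div_iff₀ (by positivity)] at hα
  calc ν / 2 * Real.exp (ν * (γ / ν * x) / 2) * (2 / ν * Real.exp (-(γ * x))) *
        Real.exp (α * x) ^ ν
      = Real.exp (-(γ / 2 - α * ν) * x) := by
        rw [← Real.exp_mul, mul_mul_mul_comm, show ν / 2 * (2 / ν) = 1 by field_simp, one_mul,
          ← Real.exp_add, ← Real.exp_add]
        congr 1
        field_simp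
        ring
    _ ≤ Real.exp (-α * x) := by
        gcongr
        linarith

lemma Real.exp_neg_mul_le_mul_rpow_neg {t x : ℝ} (ht : 0 < t) (hx : 0 < x) {p : ℝ} (hp : 0 ≤ p) :
    Real.exp (-(t * x)) ≤ (p / t) ^ p * x ^ (-p) := by
  have h := ProbabilityTheory.rpow_abs_le_mul_exp_abs x hp ht.ne'
  rw [abs_of_pos hx, abs_of_pos ht] at h
  rw [Real.exp_neg, Real.rpow_neg hx.le, ← div_eq_mul_inv,
    le_div_iff₀ (Real.rpow_pos_of_pos hx p), mul_comm, ← div_eq_mul_inv,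
    div_le_iff₀ (Real.exp_pos _)]
  exact h

lemma mul_rpow_neg_add_mul_exp_mul_rpow_neg_le {K μ ν γ x : ℝ} (hK : 0 ≤ K) (hμ : 0 < μ)
    (hν : 0 < ν) (hγ : 0 < γ) (hx : 0 < x) :
    K * (γ / ν * x) ^ (-μ) +
        K * Real.exp (-(2 * μ * γ * x)) * (2 / ν * Real.exp (-(γ * x))) ^ (-μ) ≤
      K * ((ν / γ) ^ μ + (ν / (2 * γ)) ^ μ) * x ^ (-μ) := by
  have hfirst : (γ / ν * x) ^ (-μ) = (ν / γ) ^ μ * x ^ (-μ) := by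
    rw [Real.mul_rpow (by positivity) hx.le, Real.rpow_neg (by positivity),
      ← Real.inv_rpow (by positivity), inv_div]
  have hsecond : Real.exp (-(2 * μ * γ * x)) * (2 / ν * Real.exp (-(γ * x))) ^ (-μ) =
      (ν / 2) ^ μ * Real.exp (-(γ * μ * x)) := by
    rw [Real.mul_rpow (by positivity) (by positivity), Real.rpow_neg (by positivity),
      ← Real.inv_rpow (by positivity), inv_div, ← Real.exp_mul, mul_left_comm, ← Real.exp_add]
    ring_nf
  have hexp := Real.exp_neg_mul_le_mul_rpow_neg (mul_pos hγ hμ) hx hμ.le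
  rw [mul_assoc K (Real.exp _)]
  calc K * (γ / ν * x) ^ (-μ) +
        K * (Real.exp (-(2 * μ * γ * x)) * (2 / ν * Real.exp (-(γ * x))) ^ (-μ))
      ≤ K * ((ν / γ) ^ μ * x ^ (-μ)) + K * ((ν / 2) ^ μ * ((μ / (γ * μ)) ^ μ * x ^ (-μ))) := by
        rw [hfirst, hsecond]
        gcongr
    _ = K * ((ν / γ) ^ μ + (ν / (2 * γ)) ^ μ) * x ^ (-μ) := by
        rw [mul_comm γ μ, div_mul_cancel_left₀ hμ.ne', ← mul_assoc ((ν / 2) ^ μ),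
          ← Real.mul_rpow (by positivity) (by positivity), ← div_eq_mul_inv, div_div]
        ring

lemma ENNReal.exists_mul_pow_le_ofReal_mul_exp {K ρ : ℝ≥0∞} (hK : K ≠ ∞) (hρ : ρ < 1) :
    ∃ C L : ℝ, 0 ≤ C ∧ 0 < L ∧ ∀ m : ℕ, K * ρ ^ m ≤ ENNReal.ofReal (C * Real.exp (-(L * m))) := by
  set r := max ρ.toReal (1 / 2)
  have hr₀ : 0 < r := lt_max_of_lt_right one_half_pos
  have hr₁ : r < 1 := max_lt (ENNReal.toReal_lt_of_lt_ofReal (by simpa using hρ)) one_half_lt_one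
  refine ⟨K.toReal, -Real.log r, ENNReal.toReal_nonneg, neg_pos.2 (Real.log_neg hr₀ hr₁),
    fun m ↦ ?_⟩
  have hexp : Real.exp (-(-Real.log r * m)) = r ^ m := by
    rw [neg_mul, neg_neg, mul_comm, Real.exp_nat_mul, Real.exp_log hr₀]
  rw [hexp, ENNReal.ofReal_mul ENNReal.toReal_nonneg, ENNReal.ofReal_toReal hK,
    ENNReal.ofReal_pow hr₀.le]
  gcongr
  exact (ENNReal.le_ofReal_iff_toReal_le (hρ.trans ENNReal.one_lt_top).ne hr₀.le).2
    (le_max_left _ _)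

lemma enorm_sub_sum_range_le_tsum {E : Type*} [NormedAddCommGroup E] {a : ℕ → E} {x : E}
    (h : Tendsto (fun n ↦ ∑ i ∈ range n, a i) atTop (𝓝 x)) (m : ℕ) :
    ‖x - ∑ i ∈ range m, a i‖ₑ ≤ ∑' i, ‖a (i + m)‖ₑ := by
  refine le_of_tendsto ((continuous_enorm.tendsto _).comp (h.sub_const _))
    (eventually_atTop.2 ⟨m, fun n hn ↦ ?_⟩)
  calc ‖∑ i ∈ range n, a i - ∑ i ∈ range m, a i‖ₑ
      = ‖∑ i ∈ range (n - m), a (i + m)‖ₑ := by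
        rw [← sum_Ico_eq_sub _ hn, sum_Ico_eq_sum_range]
        simp only [add_comm m]
    _ ≤ ∑ i ∈ range (n - m), ‖a (i + m)‖ₑ := enorm_sum_le _ fun i ↦ a (i + m)
    _ ≤ ∑' i, ‖a (i + m)‖ₑ := ENNReal.sum_le_tsum _

section

variable {Ω : Type*} [MeasurableSpace Ω] {P : Measure Ω}

lemma measure_ofReal_le_le_lintegral_rpow_mul {Z : Ω → ℝ≥0∞} (hZ : AEMeasurable Z P) {p : ℝ}
    (hp : 0 < p) {t : ℝ} (ht : 0 < t) :
    P {ω | ENNReal.ofReal t ≤ Z ω} ≤ (∫⁻ ω, Z ω ^ p ∂P) * ENNReal.ofReal (t ^ (-p)) := by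
  have hpow : ENNReal.ofReal t ^ p = ENNReal.ofReal (t ^ p) := ENNReal.ofReal_rpow_of_pos ht
  have hne : ENNReal.ofReal (t ^ p) ≠ 0 := ENNReal.ofReal_pos.2 (Real.rpow_pos_of_pos ht p) |>.ne'
  calc P {ω | ENNReal.ofReal t ≤ Z ω} = P {ω | ENNReal.ofReal (t ^ p) ≤ Z ω ^ p} := by
        simp only [← hpow, ENNReal.rpow_le_rpow_iff hp]
    _ ≤ (∫⁻ ω, Z ω ^ p ∂P) / ENNReal.ofReal (t ^ p) :=
        meas_ge_le_lintegral_div (hZ.pow_const p) hne ENNReal.ofReal_ne_top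
    _ = (∫⁻ ω, Z ω ^ p ∂P) * ENNReal.ofReal (t ^ (-p)) := by
        rw [div_eq_mul_inv, Real.rpow_neg ht.le,
          ENNReal.ofReal_inv_of_pos (Real.rpow_pos_of_pos ht p)]

lemma lintegral_tsum_rpow_le_of_forall_sum_range {Z : ℕ → Ω → ℝ≥0∞} (hZ : ∀ i, Measurable (Z i))
    {p : ℝ} (hp : 0 < p) {B : ℝ≥0∞} (h : ∀ n, ∫⁻ ω, (∑ i ∈ range n, Z i ω) ^ p ∂P ≤ B) :
    ∫⁻ ω, (∑' i, Z i ω) ^ p ∂P ≤ B := by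
  have hmono : Monotone fun n ω ↦ (∑ i ∈ range n, Z i ω) ^ p := fun n n' hnn' ω ↦
    ENNReal.rpow_le_rpow (sum_le_sum_of_subset (range_subset_range.2 hnn')) hp.le
  calc ∫⁻ ω, (∑' i, Z i ω) ^ p ∂P
      = ∫⁻ ω, ⨆ n, (∑ i ∈ range n, Z i ω) ^ p ∂P := by
        refine lintegral_congr fun ω ↦ ?_
        rw [ENNReal.tsum_eq_iSup_nat]
        exact Monotone.map_iSup_of_continuousAt (ENNReal.continuous_rpow_const.continuousAt)
          (ENNReal.monotone_rpow_of_nonneg hp.le) (ENNReal.zero_rpow_of_pos hp)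
    _ = ⨆ n, ∫⁻ ω, (∑ i ∈ range n, Z i ω) ^ p ∂P :=
        lintegral_iSup (fun n ↦ (Finset.measurable_sum _ fun i _ ↦ hZ i).pow_const p) hmono
    _ ≤ B := iSup_le h

lemma lintegral_sum_rpow_le_sum_lintegral_rpow_of_le_one {ι : Type*} (s : Finset ι)
    {Z : ι → Ω → ℝ≥0∞} (hZ : ∀ i, Measurable (Z i)) {p : ℝ} (hp₀ : 0 < p) (hp₁ : p ≤ 1) :
    ∫⁻ ω, (∑ i ∈ s, Z i ω) ^ p ∂P ≤ ∑ i ∈ s, ∫⁻ ω, Z i ω ^ p ∂P := by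
  rw [← lintegral_finsetSum _ fun i _ ↦ (hZ i).pow_const p]
  refine lintegral_mono fun ω ↦ ?_
  classical
  induction s using Finset.induction_on with
  | empty => simp [hp₀]
  | insert i s hi ih =>
    simp only [sum_insert hi]
    exact (ENNReal.rpow_add_le_add_rpow _ _ hp₀.le hp₁).trans (by gcongr)

lemma lintegral_sum_rpow_one_div_le_sum_of_one_le {ι : Type*} (s : Finset ι)
    {Z : ι → Ω → ℝ≥0∞} (hZ : ∀ i, Measurable (Z i)) {p : ℝ} (hp : 1 ≤ p) :
    (∫⁻ ω, (∑ i ∈ s, Z i ω) ^ p ∂P) ^ (1 / p) ≤ ∑ i ∈ s, (∫⁻ ω, Z i ω ^ p ∂P) ^ (1 / p) := by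
  classical
  induction s using Finset.induction_on with
  | empty => simp [ENNReal.zero_rpow_of_pos, zero_lt_one.trans_le hp]
  | insert i s hi ih =>
    simp only [sum_insert hi]
    calc (∫⁻ ω, (Z i ω + ∑ j ∈ s, Z j ω) ^ p ∂P) ^ (1 / p)
        ≤ (∫⁻ ω, Z i ω ^ p ∂P) ^ (1 / p) + (∫⁻ ω, (∑ j ∈ s, Z j ω) ^ p ∂P) ^ (1 / p) :=
          ENNReal.lintegral_Lp_add_le (hZ i).aemeasurable
            (Finset.measurable_sum _ fun j _ ↦ hZ j).aemeasurable hp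
      _ ≤ _ := by gcongr

lemma exists_lintegral_tsum_rpow_le_of_geometric {p : ℝ} (hp : 0 < p) {ρ : ℝ≥0∞} (hρ : ρ < 1) :
    ∃ K ≠ ∞, ∀ (G : ℝ≥0∞) (Z : ℕ → Ω → ℝ≥0∞), (∀ i, Measurable (Z i)) →
      (∀ i, ∫⁻ ω, Z i ω ^ p ∂P ≤ G * ρ ^ i) → ∫⁻ ω, (∑' i, Z i ω) ^ p ∂P ≤ K * G := by
  rcases le_or_gt p 1 with hp₁ | hp₁
  · refine ⟨(1 - ρ)⁻¹, ENNReal.inv_ne_top.2 (tsub_pos_of_lt hρ).ne', fun G Z hZ hmom ↦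
      lintegral_tsum_rpow_le_of_forall_sum_range hZ hp fun n ↦ ?_⟩
    calc ∫⁻ ω, (∑ i ∈ range n, Z i ω) ^ p ∂P
        ≤ ∑ i ∈ range n, ∫⁻ ω, Z i ω ^ p ∂P :=
          lintegral_sum_rpow_le_sum_lintegral_rpow_of_le_one _ hZ hp hp₁
      _ ≤ ∑' i, G * ρ ^ i := (sum_le_sum fun i _ ↦ hmom i).trans (ENNReal.sum_le_tsum _)
      _ = (1 - ρ)⁻¹ * G := by rw [ENNReal.tsum_mul_left, ENNReal.tsum_geometric, mul_comm]
  · have hr : ρ ^ p⁻¹ < 1 := ENNReal.rpow_lt_one hρ (inv_pos.2 hp)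
    refine ⟨(1 - ρ ^ p⁻¹)⁻¹ ^ p, ENNReal.rpow_ne_top_of_nonneg hp.le
      (ENNReal.inv_ne_top.2 (tsub_pos_of_lt hr).ne'), fun G Z hZ hmom ↦
      lintegral_tsum_rpow_le_of_forall_sum_range hZ hp fun n ↦ ?_⟩
    have hsum : (∫⁻ ω, (∑ i ∈ range n, Z i ω) ^ p ∂P) ^ p⁻¹ ≤ G ^ p⁻¹ * (1 - ρ ^ p⁻¹)⁻¹ :=
      calc (∫⁻ ω, (∑ i ∈ range n, Z i ω) ^ p ∂P) ^ p⁻¹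
          ≤ ∑ i ∈ range n, (∫⁻ ω, Z i ω ^ p ∂P) ^ p⁻¹ := by
            simpa only [one_div] using
              lintegral_sum_rpow_one_div_le_sum_of_one_le _ hZ hp₁.le
        _ ≤ ∑' i, G ^ p⁻¹ * (ρ ^ p⁻¹) ^ i := by
            refine (sum_le_sum fun i _ ↦ ?_).trans (ENNReal.sum_le_tsum _)
            rw [← ENNReal.rpow_natCast, ← ENNReal.rpow_mul, mul_comm (p⁻¹), ENNReal.rpow_mul,
              ENNReal.rpow_natCast, ← ENNReal.mul_rpow_of_nonneg _ _ (inv_nonneg.2 hp.le)]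
            exact ENNReal.rpow_le_rpow (hmom i) (inv_nonneg.2 hp.le)
        _ = G ^ p⁻¹ * (1 - ρ ^ p⁻¹)⁻¹ := by rw [ENNReal.tsum_mul_left, ENNReal.tsum_geometric]
    calc ∫⁻ ω, (∑ i ∈ range n, Z i ω) ^ p ∂P
        = ((∫⁻ ω, (∑ i ∈ range n, Z i ω) ^ p ∂P) ^ p⁻¹) ^ p := (ENNReal.rpow_inv_rpow hp.ne' _).symm
      _ ≤ (G ^ p⁻¹ * (1 - ρ ^ p⁻¹)⁻¹) ^ p := ENNReal.rpow_le_rpow hsum hp.le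
      _ = (1 - ρ ^ p⁻¹)⁻¹ ^ p * G := by
        rw [ENNReal.mul_rpow_of_nonneg _ _ hp.le, ENNReal.rpow_inv_rpow hp.ne', mul_comm]

lemma lintegral_mul_prod_comp_of_iIndepFun {ι β : Type*} [MeasurableSpace β] {ε : ι → Ω → β}
    (hε : ∀ i, Measurable (ε i)) (hindep : iIndepFun ε P) {i₀ : ι}
    (hident : ∀ i, IdentDistrib (ε i) (ε i₀) P P) {u : ℕ → ι} (hu : u.Injective)
    {φ ψ : β → ℝ≥0∞} (hφ : Measurable φ) (hψ : Measurable ψ) (n : ℕ) :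
    ∫⁻ ω, φ (ε (u n) ω) * ∏ j ∈ range n, ψ (ε (u j) ω) ∂P =
      (∫⁻ ω, φ (ε i₀ ω) ∂P) * (∫⁻ ω, ψ (ε i₀ ω) ∂P) ^ n := by
  classical
  set χ : ℕ → β → ℝ≥0∞ := fun j ↦ if j = n then φ else ψ
  have hχ (j : ℕ) : Measurable (χ j) := by by_cases h : j = n <;> simp [χ, h, hφ, hψ]
  have hχ_lt {j : ℕ} (hj : j ∈ range n) : χ j = ψ := if_neg (mem_range.1 hj).ne
  calc ∫⁻ ω, φ (ε (u n) ω) * ∏ j ∈ range n, ψ (ε (u j) ω) ∂P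
      = ∫⁻ ω, ∏ j ∈ range (n + 1), χ j (ε (u j) ω) ∂P := by
        refine lintegral_congr fun ω ↦ ?_
        rw [prod_range_succ, prod_congr rfl fun j hj ↦ congrFun (hχ_lt hj) (ε (u j) ω), mul_comm]
        simp [χ]
    _ = ∏ j ∈ range (n + 1), ∫⁻ ω, χ j (ε (u j) ω) ∂P :=
        lintegral_prod_eq_prod_lintegral_of_indepFun _ (fun j ↦ χ j ∘ ε (u j))
          ((hindep.precomp hu).comp χ hχ) fun j ↦ (hχ j).comp (hε _)
    _ = ∏ j ∈ range (n + 1), ∫⁻ ω, χ j (ε i₀ ω) ∂P :=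
        prod_congr rfl fun j _ ↦ ((hident (u j)).comp (hχ j)).lintegral_eq
    _ = (∫⁻ ω, φ (ε i₀ ω) ∂P) * (∫⁻ ω, ψ (ε i₀ ω) ∂P) ^ n := by
        rw [prod_range_succ, prod_congr rfl fun j hj ↦ by rw [hχ_lt hj], prod_const, card_range,
          mul_comm]
        simp [χ]

lemma IsPowerTransform.measure_lt_abs_sub_le {ν : ℝ} {f : ℝ → ℝ}
    (hf : IsPowerTransform ν f) (hν : 0 ≤ ν) {Y Y' e : Ω → ℝ}
    {S S' : Ω → ℝ≥0∞} (hY : ∀ᵐ ω ∂P, ‖Y ω‖ₑ ≤ S ω) (hY' : ∀ᵐ ω ∂P, ‖Y' ω‖ₑ ≤ S ω)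
    (hYY' : ∀ᵐ ω ∂P, ‖Y ω - Y' ω‖ₑ ≤ S' ω) {a b s δ : ℝ}
    (hδ : ν / 2 * Real.exp (ν * b / 2) * s * a ^ ν ≤ δ) :
    P {ω | δ < |f (Real.exp (Y ω / 2) * e ω) - f (Real.exp (Y' ω / 2) * e ω)|} ≤
      P {ω | a ≤ |e ω|} + P {ω | ENNReal.ofReal b ≤ S ω} + P {ω | ENNReal.ofReal s ≤ S' ω} := by
  have habs {x : ℝ} {t : ℝ≥0∞} {r : ℝ} (hx : ‖x‖ₑ ≤ t) (ht : t < ENNReal.ofReal r) : |x| ≤ r := by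
    rw [Real.enorm_eq_ofReal_abs] at hx
    exact (ENNReal.ofReal_lt_ofReal_iff'.1 (hx.trans_lt ht)).1.le
  refine (measure_mono_ae ?_).trans
    ((measure_union_le _ _).trans (by gcongr; exact measure_union_le _ _))
  filter_upwards [hY, hY', hYY'] with ω hYS hY'S hYS' (hω : δ < _)
  change ω ∈ (_ ∪ _ ∪ _ : Set Ω)
  by_contra hnot
  simp only [Set.mem_union, Set.mem_ofPred_eq, not_or, not_le] at hnot
  obtain ⟨⟨he, hS⟩, hS'⟩ := hnot
  have hmax : max (Y ω) (Y' ω) ≤ b :=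
    max_le ((le_abs_self _).trans (habs hYS hS)) ((le_abs_self _).trans (habs hY'S hS))
  refine (not_lt.2 ?_) hω
  calc |f (Real.exp (Y ω / 2) * e ω) - f (Real.exp (Y' ω / 2) * e ω)|
      ≤ ν / 2 * Real.exp (ν * max (Y ω) (Y' ω) / 2) * |Y ω - Y' ω| * |e ω| ^ ν :=
        hf.abs_apply_exp_mul_sub_apply_exp_mul_le hν _ _ _
    _ ≤ ν / 2 * Real.exp (ν * b / 2) * s * a ^ ν := by
        have hs := habs hYS' hS'
        have hs₀ : 0 ≤ s := (abs_nonneg _).trans hs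
        have he' := he.le
        gcongr
    _ ≤ δ := hδ

variable (ε : ℤ → Ω → ℝ) (c g : ℝ → ℝ)

/-- The summand of index `i + 1` in the paper's series for `X_k`. -/
def garchTerm (k : ℤ) (i : ℕ) (ω : Ω) : ℝ :=
  g (ε (k - (i + 1)) ω) * ∏ j ∈ range i, c (ε (k - (j + 1)) ω)

variable {ε c g}

lemma measurable_garchTerm (hc : Measurable c) (hg : Measurable g) (hε : ∀ k, Measurable (ε k))
    (k : ℤ) (i : ℕ) : Measurable (garchTerm ε c g k i) :=
  (hg.comp (hε _)).mul (Finset.measurable_prod _ fun _ _ ↦ hc.comp (hε _))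

lemma lintegral_enorm_garchTerm_rpow (hc : Measurable c) (hg : Measurable g)
    (hε : ∀ k, Measurable (ε k)) (hindep : iIndepFun ε P)
    (hident : ∀ k, IdentDistrib (ε k) (ε 0) P P) {p : ℝ} (hp : 0 ≤ p) (k : ℤ) (i : ℕ) :
    ∫⁻ ω, ‖garchTerm ε c g k i ω‖ₑ ^ p ∂P =
      (∫⁻ ω, ‖g (ε 0 ω)‖ₑ ^ p ∂P) * (∫⁻ ω, ‖c (ε 0 ω)‖ₑ ^ p ∂P) ^ i := by
  have hu : (fun j : ℕ ↦ k - (j + 1)).Injective := fun _ _ h ↦ by simpa using h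
  rw [← lintegral_mul_prod_comp_of_iIndepFun hε hindep hident hu
    (hg.enorm.pow_const p) (hc.enorm.pow_const p) i]
  refine lintegral_congr fun ω ↦ ?_
  rw [garchTerm, enorm_mul, ENNReal.mul_rpow_of_nonneg _ _ hp, ENNReal.prod_rpow_of_nonneg hp]
  simp only [enorm_eq_nnnorm, nnnorm_prod, ENNReal.ofNNReal_finsetProd]

lemma exists_lintegral_tsum_enorm_garchTerm_rpow_le (hc : Measurable c) (hg : Measurable g)
    (hε : ∀ k, Measurable (ε k)) (hindep : iIndepFun ε P)
    (hident : ∀ k, IdentDistrib (ε k) (ε 0) P P) {p : ℝ} (hp : 0 < p)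
    (hcp : ∫⁻ ω, ‖c (ε 0 ω)‖ₑ ^ p ∂P < 1) (hgp : ∫⁻ ω, ‖g (ε 0 ω)‖ₑ ^ p ∂P ≠ ∞) :
    ∃ K L : ℝ, 0 ≤ K ∧ 0 < L ∧ ∀ k m, ∫⁻ ω, (∑' i, ‖garchTerm ε c g k (i + m) ω‖ₑ) ^ p ∂P ≤
      ENNReal.ofReal (K * Real.exp (-(L * m))) := by
  obtain ⟨K, hK, hsum⟩ := exists_lintegral_tsum_rpow_le_of_geometric (P := P) hp hcp
  obtain ⟨C, L, hC, hL, hCL⟩ :=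
    ENNReal.exists_mul_pow_le_ofReal_mul_exp (ENNReal.mul_ne_top hK hgp) hcp
  refine ⟨C, L, hC, hL, fun k m ↦ le_trans ?_ (hCL m)⟩
  rw [mul_assoc]
  refine hsum _ _ (fun i ↦ (measurable_garchTerm hc hg hε k _).enorm) fun i ↦ ?_
  rw [lintegral_enorm_garchTerm_rpow hc hg hε hindep hident hp.le, pow_add, mul_assoc,
    mul_comm (_ ^ i)]

lemma IsPowerTransform.measure_lt_abs_sub_sum_garchTerm_le {ν : ℝ} {f : ℝ → ℝ}
    (hf : IsPowerTransform ν f) (hν : 0 ≤ ν) (hc : Measurable c) (hg : Measurable g)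
    (hε : ∀ k, Measurable (ε k)) {k : ℤ} (hident : IdentDistrib (ε k) (ε 0) P P) {X : Ω → ℝ}
    (hX : ∀ᵐ ω ∂P, Tendsto (fun n ↦ ∑ i ∈ range n, garchTerm ε c g k i ω) atTop (𝓝 (X ω)))
    {p K L : ℝ} (hp : 0 < p) (hK : 0 ≤ K)
    (htail : ∀ n : ℕ, ∫⁻ ω, (∑' i, ‖garchTerm ε c g k (i + n) ω‖ₑ) ^ p ∂P ≤
      ENNReal.ofReal (K * Real.exp (-(L * n))))
    (m : ℕ) {a b s δ : ℝ} (hb : 0 < b) (hs : 0 < s)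
    (hδ : ν / 2 * Real.exp (ν * b / 2) * s * a ^ ν ≤ δ) :
    P {ω | δ < |f (Real.exp (X ω / 2) * ε k ω) -
        f (Real.exp ((∑ i ∈ range m, garchTerm ε c g k i ω) / 2) * ε k ω)|} ≤
      P {ω | a ≤ |ε 0 ω|} + ENNReal.ofReal (K * b ^ (-p)) +
        ENNReal.ofReal (K * Real.exp (-(L * m)) * s ^ (-p)) := by
  set S : ℕ → Ω → ℝ≥0∞ := fun n ω ↦ ∑' i, ‖garchTerm ε c g k (i + n) ω‖ₑ
  have hmarkov (n : ℕ) {t : ℝ} (ht : 0 < t) :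
      P {ω | ENNReal.ofReal t ≤ S n ω} ≤ ENNReal.ofReal (K * Real.exp (-(L * n)) * t ^ (-p)) := by
    rw [ENNReal.ofReal_mul (by positivity)]
    exact (measure_ofReal_le_le_lintegral_rpow_mul (Measurable.tsum fun i ↦
      (measurable_garchTerm hc hg hε k _).enorm).aemeasurable hp ht).trans
      (mul_le_mul_left (htail n) _)
  calc _ ≤ P {ω | a ≤ |ε k ω|} + P {ω | ENNReal.ofReal b ≤ S 0 ω} +
        P {ω | ENNReal.ofReal s ≤ S m ω} := by
        refine hf.measure_lt_abs_sub_le hν ?_ (.of_forall fun ω ↦ ?_) ?_ hδ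
        · exact hX.mono fun ω h ↦ by simpa [S] using enorm_sub_sum_range_le_tsum h 0
        · exact (enorm_sum_le _ _).trans (ENNReal.sum_le_tsum _)
        · exact hX.mono fun ω h ↦ enorm_sub_sum_range_le_tsum h m
    _ ≤ _ := by
        refine add_le_add (add_le_add ?_ ?_) (hmarkov m hs)
        · exact (hident.measure_mem_eq (measurableSet_le measurable_const measurable_abs)).le
        · simpa using hmarkov 0 hb

end

theorem exponential_garch_eta_tail_rate_general
    {Ω : Type*} [MeasurableSpace Ω] (P : Measure Ω)
    (ε : ℤ → Ω → ℝ) (c g : ℝ → ℝ)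
    (hc : Measurable c) (hg : Measurable g)
    (hεmeas : ∀ k, Measurable (ε k))
    (hindep : iIndepFun ε P)
    (hident : ∀ k, IdentDistrib (ε k) (ε 0) P P)
    (μ : ℝ) (hμ : 0 < μ)
    (hcmom : ∫⁻ ω, ENNReal.ofReal (|c (ε 0 ω)| ^ μ) ∂P < 1)
    (hgmom : ∫⁻ ω, ENNReal.ofReal (|g (ε 0 ω)| ^ μ) ∂P < ⊤)
    (ν : ℝ) (hν : 0 < ν)
    (f : ℝ → ℝ)
    (hf : (∀ x, f x = |x| ^ ν) ∨ (∀ x, f x = Real.sign x * |x| ^ ν))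
    (X : ℤ → Ω → ℝ)
    (hX : ∀ k : ℤ, ∀ᵐ ω ∂P, Tendsto
      (fun m => ∑ i ∈ Finset.range m,
        g (ε (k - (i + 1)) ω) * ∏ j ∈ Finset.range i, c (ε (k - (j + 1)) ω))
      atTop (nhds (X k ω)))
    (Xm : ℤ → ℕ → Ω → ℝ)
    (hXm : ∀ k m ω, Xm k m ω = ∑ i ∈ Finset.range m,
      g (ε (k - (i + 1)) ω) * ∏ j ∈ Finset.range i, c (ε (k - (j + 1)) ω))
    (η : ℤ → Ω → ℝ) (hη : ∀ k ω, η k ω = f (Real.exp (X k ω / 2) * ε k ω))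
    (ηm : ℤ → ℕ → Ω → ℝ)
    (hηm : ∀ k m ω, ηm k m ω = f (Real.exp (Xm k m ω / 2) * ε k ω)) :
    ∃ α₀ > (0 : ℝ), ∀ α : ℝ, 0 < α → α ≤ α₀ →
      ∃ C₈ : ℝ, ∀ k : ℤ, ∀ m : ℕ, 1 ≤ m →
        P {ω | |η k ω - ηm k m ω| > Real.exp (-α * m)} ≤
          P {ω | |ε 0 ω| ≥ Real.exp (α * m)} +
            ENNReal.ofReal (C₈ * (m : ℝ) ^ (-μ)) := by
  have henorm (x : ℝ) : ENNReal.ofReal (|x| ^ μ) = ‖x‖ₑ ^ μ := by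
    rw [Real.enorm_eq_ofReal_abs, ENNReal.ofReal_rpow_of_nonneg (abs_nonneg x) hμ.le]
  simp only [henorm] at hcmom hgmom
  obtain ⟨K, L, hK, hL, htail⟩ := exists_lintegral_tsum_enorm_garchTerm_rpow_le hc hg hεmeas
    hindep hident hμ hcmom hgmom.ne
  obtain ⟨γ, hγ, rfl⟩ : ∃ γ > 0, L = 2 * μ * γ := ⟨L / (2 * μ), by positivity, by field_simp⟩
  refine ⟨γ / (2 * (1 + ν)), by positivity, fun α _ hαγ ↦
    ⟨K * ((ν / γ) ^ μ + (ν / (2 * γ)) ^ μ), fun k m hm ↦ ?_⟩⟩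
  have hm₀ : (0 : ℝ) < m := by exact_mod_cast hm
  simp only [hη, hηm, hXm, gt_iff_lt]
  refine (IsPowerTransform.measure_lt_abs_sub_sum_garchTerm_le hf hν.le hc hg hεmeas (hident k)
    (hX k) hμ hK (htail k) m (b := γ / ν * m) (by positivity) (by positivity)
    (Real.half_mul_exp_mul_exp_mul_exp_rpow_le hν hm₀.le hαγ)).trans ?_
  rw [add_assoc, ← ENNReal.ofReal_add (by positivity) (by positivity)]
  gcongr
  exact mul_rpow_neg_add_mul_exp_mul_rpow_neg_le hK hμ hν hγ hm₀

/-- **Lemma 7.** For an exponential augmented GARCH process, if `−∞ < E log|c(ε₀)| < 0` and,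
for some `μ > 0`, `E|c(ε₀)|^μ < 1` and `E|g(ε₀)|^μ < ∞`, then for all sufficiently small
`α > 0` there is `C₈` such that
`P(|η_k − η_{k,m}| > e^{−αm}) ≤ P(|ε₀| ≥ e^{αm}) + C₈ m^{−μ}` for all `k`, `m ≥ 1`. -/
theorem exponential_garch_eta_tail_rate
    {Ω : Type*} [MeasurableSpace Ω] (P : Measure Ω) [IsProbabilityMeasure P]
    (ε : ℤ → Ω → ℝ) (c g : ℝ → ℝ)
    (hc : Measurable c) (hg : Measurable g)
    (hεmeas : ∀ k, Measurable (ε k))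
    (hindep : iIndepFun ε P)
    (hident : ∀ k, IdentDistrib (ε k) (ε 0) P P)
    (hlogint : Integrable (fun ω => Real.log |c (ε 0 ω)|) P)
    (hlogneg : ∫ ω, Real.log |c (ε 0 ω)| ∂P < 0)
    (μ : ℝ) (hμ : 0 < μ)
    (hcmom : ∫⁻ ω, ENNReal.ofReal (|c (ε 0 ω)| ^ μ) ∂P < 1)
    (hgmom : ∫⁻ ω, ENNReal.ofReal (|g (ε 0 ω)| ^ μ) ∂P < ⊤)
    (ν : ℝ) (hν : 0 < ν)
    (f : ℝ → ℝ)
    (hf : (∀ x, f x = |x| ^ ν) ∨ (∀ x, f x = Real.sign x * |x| ^ ν))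
    (X : ℤ → Ω → ℝ) (hXmeas : ∀ k, Measurable (X k))
    (hX : ∀ k : ℤ, ∀ᵐ ω ∂P, Tendsto
      (fun m => ∑ i ∈ Finset.range m,
        g (ε (k - (i + 1)) ω) * ∏ j ∈ Finset.range i, c (ε (k - (j + 1)) ω))
      atTop (nhds (X k ω)))
    (Xm : ℤ → ℕ → Ω → ℝ)
    (hXm : ∀ k m ω, Xm k m ω = ∑ i ∈ Finset.range m,
      g (ε (k - (i + 1)) ω) * ∏ j ∈ Finset.range i, c (ε (k - (j + 1)) ω))
    (η : ℤ → Ω → ℝ) (hη : ∀ k ω, η k ω = f (Real.exp (X k ω / 2) * ε k ω))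
    (ηm : ℤ → ℕ → Ω → ℝ)
    (hηm : ∀ k m ω, ηm k m ω = f (Real.exp (Xm k m ω / 2) * ε k ω)) :
    ∃ α₀ > (0 : ℝ), ∀ α : ℝ, 0 < α → α ≤ α₀ →
      ∃ C₈ : ℝ, ∀ k : ℤ, ∀ m : ℕ, 1 ≤ m →
        P {ω | |η k ω - ηm k m ω| > Real.exp (-α * m)} ≤
          P {ω | |ε 0 ω| ≥ Real.exp (α * m)} +
            ENNReal.ofReal (C₈ * (m : ℝ) ^ (-μ)) :=
  exponential_garch_eta_tail_rate_general P ε c g hc hg hεmeas hindep hident μ hμ hcmom hgmom ν hν f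
    hf X hX Xm hXm η hη ηm hηm
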